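/- Let (N,x) be the apex game with apex player a, |N| ≥ 3, let S ⊆ N with |S| ≥ 2, and let p_S, q_S be probability distributions over Π₂(S) and over the subsets of N\S. Then the coopetition index takes the values: C^x_{p,q}(S) = q_S(N\(S∪{a})) − q_S({a}) if a ∉ S; C^x_{p,q}(S) = (q_S(∅) − q_S(N\S))·p_S({{a}, S\{a}}) if a ∈ S and S ≠ N; and C^x_{p,q}(N) = 0. -/
import Mathlib


open Finset

variable {α : Type*} [DecidableEq α]

/-- A simple monotone game on the player set `N`: `v` maps coalitions to `{0,1}`,
`v ∅ = 0`, `v N = 1`, and `v` is monotone on subsets of `N`. -/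
structure SimpleGame (N : Finset α) (v : Finset α → ℝ) : Prop where
  empty : v ∅ = 0
  full : v N = 1
  mono : ∀ ⦃S T : Finset α⦄, S ⊆ T → T ⊆ N → v S ≤ v T
  binary : ∀ S ⊆ N, v S = 0 ∨ v S = 1

/-- Block interaction indicator `BI v {S₁,S₂} T = v(S₁∪S₂∪T) − v(S₁∪T) − v(S₂∪T) + v(T)`. -/
noncomputable def BI (v : Finset α → ℝ) (π : Sym2 (Finset α)) (T : Finset α) : ℝ :=
  Sym2.lift ⟨fun A B => v (A ∪ B ∪ T) - v (A ∪ T) - v (B ∪ T) + v T,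
    fun A B => by simp only []; rw [Finset.union_comm A B]; ring⟩ π

/-- `Π₂(S)`: the set of unordered partitions of `S` into two nonempty parts. -/
def Pi2 (S : Finset α) : Finset (Sym2 (Finset α)) :=
  (S.powerset.filter fun Q => Q ≠ ∅ ∧ Q ≠ S).image fun Q => s(Q, S \ Q)

/-- `S` is critical with respect to `T`: `v(S∪T) − v(T) = 1`. -/
def Critical (v : Finset α → ℝ) (S T : Finset α) : Prop := v (S ∪ T) - v T = 1

/-- `S` is essential critical with respect to `T`: `S` is critical wrt `T` and no
proper nonempty subset of `S` is critical wrt `T`. -/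
def EssentialCritical (v : Finset α → ℝ) (S T : Finset α) : Prop :=
  Critical v S T ∧ ∀ S' : Finset α, S' ⊂ S → S'.Nonempty → ¬ Critical v S' T

/-- The attitude `A_p(S,T)` of `S` towards `T` under the distribution `p` on `Π₂(S)`. -/
noncomputable def attitude (v : Finset α → ℝ) (p : Sym2 (Finset α) → ℝ)
    (S T : Finset α) : ℝ :=
  ∑ π ∈ Pi2 S, p π * BI v π T

/-- The coopetition index `C_{p,q}(S)`. -/
noncomputable def coop (N : Finset α) (v : Finset α → ℝ)
    (p : Sym2 (Finset α) → ℝ) (q : Finset α → ℝ) (S : Finset α) : ℝ :=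
  ∑ T ∈ (N \ S).powerset, q T * attitude v p S T

/-- `Σ_S(N)`: orderings of `N` (as lists) in which the elements of `S` occupy
consecutive positions. -/
noncomputable def SigmaOrd (N S : Finset α) : Finset (List α) := by
  classical
  exact N.toList.permutations.toFinset.filter
    fun l => ∃ k ∈ Finset.range (l.length + 1), ((l.drop k).take S.card).toFinset = S

/-- Sequential attitude `AS(S,σ)` of `S` towards the ordering `l`:
the average over `k = 1, …, s−1` of the block interaction between the first `k` and the
last `s−k` elements of the block of `S` in `l`, against the predecessors of `S` in `l`. -/
noncomputable def seqAttitude (v : Finset α → ℝ) (S : Finset α) (l : List α) : ℝ :=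
  (1 / ((S.card : ℝ) - 1)) * ∑ k ∈ Finset.Icc 1 (S.card - 1),
    BI v (s((((l.dropWhile fun x => decide (x ∉ S)).take S.card).take k).toFinset,
            (((l.dropWhile fun x => decide (x ∉ S)).take S.card).drop k).toFinset))
      (l.takeWhile fun x => decide (x ∉ S)).toFinset

/-- Shapley-Owen coopetition index defined through orderings. -/
noncomputable def C_SO_ord (N : Finset α) (v : Finset α → ℝ) (S : Finset α) : ℝ :=
  (1 / ((SigmaOrd N S).card : ℝ)) * ∑ l ∈ SigmaOrd N S, seqAttitude v S l

/-- Shapley-Owen weight on partitions `{Q, S\Q}`: `2·q!·(s−q)!/((s−1)·s!)`. -/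
noncomputable def soWeight (S : Finset α) : Sym2 (Finset α) → ℝ :=
  Sym2.lift ⟨fun A B => (2 * A.card.factorial * B.card.factorial : ℝ) /
      (((S.card : ℝ) - 1) * (S.card.factorial : ℝ)),
    fun A B => by simp only []; ring⟩

/-- Shapley-Owen weight on external coalitions: `t!·(n−s−t)!/(n−s+1)!`. -/
noncomputable def soExt (N S T : Finset α) : ℝ :=
  (T.card.factorial * (N.card - S.card - T.card).factorial : ℝ) /
    ((N.card - S.card + 1).factorial : ℝ)

/-- Shapley-Owen coopetition index (closed formula). -/
noncomputable def C_SO (N : Finset α) (v : Finset α → ℝ) (S : Finset α) : ℝ :=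
  ∑ T ∈ (N \ S).powerset, soExt N S T * ∑ π ∈ Pi2 S, soWeight S π * BI v π T

/-- Banzhaf coopetition index. -/
noncomputable def C_Bz (N : Finset α) (v : Finset α → ℝ) (S : Finset α) : ℝ :=
  (1 / ((2 : ℝ) ^ (N.card - S.card) * ((2 : ℝ) ^ (S.card - 1) - 1))) *
    ∑ T ∈ (N \ S).powerset, ∑ π ∈ Pi2 S, BI v π T

/-- Decisiveness index `D_{p,q}(S)`. -/
noncomputable def decis (N : Finset α) (v : Finset α → ℝ)
    (p : Sym2 (Finset α) → ℝ) (q : Finset α → ℝ) (S : Finset α) : ℝ :=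
  ∑ T ∈ (N \ S).powerset, q T * ∑ π ∈ Pi2 S, p π * |BI v π T|

/-- Banzhaf decisiveness index. -/
noncomputable def D_Bz (N : Finset α) (v : Finset α → ℝ) (S : Finset α) : ℝ :=
  (1 / ((2 : ℝ) ^ (N.card - S.card) * ((2 : ℝ) ^ (S.card - 1) - 1))) *
    ∑ T ∈ (N \ S).powerset, ∑ π ∈ Pi2 S, |BI v π T|

/-- Shapley-Owen decisiveness index. -/
noncomputable def D_SO (N : Finset α) (v : Finset α → ℝ) (S : Finset α) : ℝ :=
  ∑ T ∈ (N \ S).powerset, soExt N S T * ∑ π ∈ Pi2 S, soWeight S π * |BI v π T|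

/-- The apex game on `N` with apex player `a`. -/
noncomputable def apexGame (N : Finset α) (a : α) : Finset α → ℝ :=
  fun S => if (a ∈ S ∧ (S \ {a}).Nonempty) ∨ S = N \ {a} then 1 else 0

section ApexHelpers

variable {N S Q T A B : Finset α} {a : α}

lemma apex_one (h : (a ∈ T ∧ (T \ {a}).Nonempty) ∨ T = N \ {a}) :
    apexGame N a T = 1 := by simp only [apexGame]; rw [if_pos h]

lemma apex_zero (h : ¬ ((a ∈ T ∧ (T \ {a}).Nonempty) ∨ T = N \ {a})) :
    apexGame N a T = 0 := by simp only [apexGame]; rw [if_neg h]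

lemma BI_mk (v : Finset α → ℝ) (A B T : Finset α) :
    BI v s(A, B) T = v (A ∪ B ∪ T) - v (A ∪ T) - v (B ∪ T) + v T := rfl

lemma mem_Pi2 {π : Sym2 (Finset α)} :
    π ∈ Pi2 S ↔ ∃ Q, Q ⊆ S ∧ Q ≠ ∅ ∧ Q ≠ S ∧ π = s(Q, S \ Q) := by
  simp only [Pi2, Finset.mem_image, Finset.mem_filter, Finset.mem_powerset]
  constructor
  · rintro ⟨Q, ⟨h1, h2, h3⟩, h4⟩; exact ⟨Q, h1, h2, h3, h4.symm⟩
  · rintro ⟨Q, h1, h2, h3, h4⟩; exact ⟨Q, ⟨h1, h2, h3⟩, h4.symm⟩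

lemma BI_apex_out (ha : a ∈ N) (haS : a ∉ S) (hSN : S ⊆ N)
    (hQS : Q ⊆ S) (hQ0 : Q.Nonempty) (hQ1 : (S \ Q).Nonempty) (hT : T ⊆ N \ S) :
    BI (apexGame N a) s(Q, S \ Q) T
      = (if T = N \ (S ∪ {a}) then 1 else 0) - (if T = {a} then 1 else 0) := by
  have hU : Q ∪ S \ Q = S := Finset.union_sdiff_of_subset hQS
  rw [BI_mk, hU]
  obtain ⟨b, hb⟩ := hQ0
  obtain ⟨c, hc⟩ := hQ1
  have hbS : b ∈ S := hQS hb
  have hcS : c ∈ S := (Finset.mem_sdiff.mp hc).1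
  have hcQ : c ∉ Q := (Finset.mem_sdiff.mp hc).2
  have hTS : ∀ x ∈ S, x ∉ T := fun x hx hxT => (Finset.mem_sdiff.mp (hT hxT)).2 hx
  by_cases haT : a ∈ T
  · have h1 : apexGame N a (S ∪ T) = 1 := apex_one (Or.inl ⟨Finset.mem_union_right _ haT,
      ⟨b, Finset.mem_sdiff.mpr ⟨Finset.mem_union_left _ hbS,
        by simp only [Finset.mem_singleton]; rintro rfl; exact haS hbS⟩⟩⟩)
    have h2 : apexGame N a (Q ∪ T) = 1 := apex_one (Or.inl ⟨Finset.mem_union_right _ haT,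
      ⟨b, Finset.mem_sdiff.mpr ⟨Finset.mem_union_left _ hb,
        by simp only [Finset.mem_singleton]; rintro rfl; exact haS hbS⟩⟩⟩)
    have h3 : apexGame N a (S \ Q ∪ T) = 1 := apex_one (Or.inl ⟨Finset.mem_union_right _ haT,
      ⟨c, Finset.mem_sdiff.mpr ⟨Finset.mem_union_left _ hc,
        by simp only [Finset.mem_singleton]; rintro rfl; exact haS hcS⟩⟩⟩)
    have hTA : T ≠ N \ (S ∪ {a}) := by
      intro h; rw [h] at haT; simp at haT
    rw [h1, h2, h3, if_neg hTA]
    by_cases hTa : T = {a}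
    · have h4 : apexGame N a T = 0 := by
        apply apex_zero
        rintro (⟨-, hne⟩ | hEq)
        · rw [hTa] at hne; simp at hne
        · rw [hEq] at haT; simp at haT
      rw [h4, if_pos hTa]; ring
    · have h4 : apexGame N a T = 1 := by
        apply apex_one; left
        refine ⟨haT, ?_⟩
        rw [Finset.sdiff_nonempty]
        intro hsub
        exact hTa (Finset.Subset.antisymm hsub (Finset.singleton_subset_iff.mpr haT))
      rw [h4, if_neg hTa]; ring
  · have h2 : apexGame N a (Q ∪ T) = 0 := by
      apply apex_zero
      rintro (⟨h, -⟩ | hEq)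
      · rcases Finset.mem_union.mp h with h | h
        exacts [haS (hQS h), haT h]
      · have hmem : c ∈ Q ∪ T := hEq ▸ (Finset.mem_sdiff.mpr ⟨hSN hcS,
          by simp only [Finset.mem_singleton]; rintro rfl; exact haS hcS⟩)
        rcases Finset.mem_union.mp hmem with h | h
        exacts [hcQ h, hTS c hcS h]
    have h3 : apexGame N a (S \ Q ∪ T) = 0 := by
      apply apex_zero
      rintro (⟨h, -⟩ | hEq)
      · rcases Finset.mem_union.mp h with h | h
        · exact haS (Finset.mem_sdiff.mp h).1
        · exact haT h
      · have hmem : b ∈ S \ Q ∪ T := hEq ▸ (Finset.mem_sdiff.mpr ⟨hSN hbS,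
          by simp only [Finset.mem_singleton]; rintro rfl; exact haS hbS⟩)
        rcases Finset.mem_union.mp hmem with h | h
        exacts [(Finset.mem_sdiff.mp h).2 hb, hTS b hbS h]
    have h4 : apexGame N a T = 0 := by
      apply apex_zero
      rintro (⟨h, -⟩ | hEq)
      · exact haT h
      · have hmem : b ∈ T := hEq ▸ Finset.mem_sdiff.mpr ⟨hSN hbS,
          by simp only [Finset.mem_singleton]; rintro rfl; exact haS hbS⟩
        exact hTS b hbS hmem
    have hTa2 : T ≠ {a} := fun h => haT (h ▸ Finset.mem_singleton_self a)
    rw [h2, h3, h4, if_neg hTa2]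
    by_cases hTA : T = N \ (S ∪ {a})
    · have h1 : apexGame N a (S ∪ T) = 1 := by
        apply apex_one; right
        subst hTA
        ext x
        simp only [Finset.mem_union, Finset.mem_sdiff, Finset.mem_singleton, not_or]
        constructor
        · rintro (h | ⟨h1, h2, h3⟩)
          · exact ⟨hSN h, by rintro rfl; exact haS h⟩
          · exact ⟨h1, h3⟩
        · rintro ⟨h1, h2⟩
          by_cases hx : x ∈ S
          · exact Or.inl hx
          · exact Or.inr ⟨h1, hx, h2⟩
      rw [h1, if_pos hTA]; ring
    · have h1 : apexGame N a (S ∪ T) = 0 := by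
        apply apex_zero
        rintro (⟨h, -⟩ | hEq)
        · rcases Finset.mem_union.mp h with h | h
          exacts [haS h, haT h]
        · apply hTA
          ext x
          simp only [Finset.mem_sdiff, Finset.mem_union, Finset.mem_singleton, not_or]
          constructor
          · intro hx
            have hxN : x ∈ N := (Finset.mem_sdiff.mp (hT hx)).1
            have hxS : x ∉ S := (Finset.mem_sdiff.mp (hT hx)).2
            exact ⟨hxN, hxS, by rintro rfl; exact haT hx⟩
          · rintro ⟨h1, h2, h3⟩
            have hmem : x ∈ S ∪ T := hEq ▸ Finset.mem_sdiff.mpr ⟨h1,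
              by simp only [Finset.mem_singleton]; exact h3⟩
            rcases Finset.mem_union.mp hmem with h | h
            exacts [absurd h h2, h]
      rw [h1, if_neg hTA]; ring

lemma BI_apex_in (hSN : S ⊆ N) (hU : A ∪ B = S) (hd : Disjoint A B)
    (haA : a ∈ A) (hB : B.Nonempty) (hT : T ⊆ N \ S) :
    BI (apexGame N a) s(A, B) T
      = if A = {a} then (if T = ∅ then (1:ℝ) else 0) - (if T = N \ S then 1 else 0)
        else 0 := by
  have hAS : A ⊆ S := hU ▸ Finset.subset_union_left
  have hBS : B ⊆ S := hU ▸ Finset.subset_union_right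
  have haS : a ∈ S := hAS haA
  have haT : a ∉ T := fun h => (Finset.mem_sdiff.mp (hT h)).2 haS
  obtain ⟨b, hbB⟩ := hB
  have hbS : b ∈ S := hBS hbB
  have hba : b ≠ a := by rintro rfl; exact Finset.disjoint_left.mp hd haA hbB
  have hTS : ∀ x ∈ S, x ∉ T := fun x hx hxT => (Finset.mem_sdiff.mp (hT hxT)).2 hx
  rw [BI_mk, hU]
  have h1 : apexGame N a (S ∪ T) = 1 := apex_one (Or.inl ⟨Finset.mem_union_left _ haS,
    ⟨b, Finset.mem_sdiff.mpr ⟨Finset.mem_union_left _ hbS,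
      by simp only [Finset.mem_singleton]; exact hba⟩⟩⟩)
  have h4 : apexGame N a T = 0 := by
    apply apex_zero
    rintro (⟨h, -⟩ | hEq)
    · exact haT h
    · have hmem : b ∈ T := hEq ▸ Finset.mem_sdiff.mpr ⟨hSN hbS,
        by simp only [Finset.mem_singleton]; exact hba⟩
      exact hTS b hbS hmem
  have haBT : a ∉ B ∪ T := by
    rw [Finset.mem_union]
    rintro (h | h)
    exacts [Finset.disjoint_left.mp hd haA h, haT h]
  by_cases hAa : A = {a}
  · subst hAa
    have hB' : B = S \ {a} := by rw [← hU, Finset.union_sdiff_cancel_left hd]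
    have h2 : apexGame N a ({a} ∪ T) = if T = ∅ then (0:ℝ) else 1 := by
      by_cases hT0 : T = ∅
      · subst hT0
        rw [if_pos rfl]
        apply apex_zero
        rintro (⟨-, hne⟩ | hEq)
        · simp at hne
        · have hmem : a ∈ N \ {a} := hEq ▸ (by simp)
          simp at hmem
      · rw [if_neg hT0]
        apply apex_one
        left
        refine ⟨by simp, ?_⟩
        obtain ⟨t, ht⟩ := Finset.nonempty_iff_ne_empty.mpr hT0
        exact ⟨t, Finset.mem_sdiff.mpr ⟨Finset.mem_union_right _ ht,
          by simp only [Finset.mem_singleton]; rintro rfl; exact haT ht⟩⟩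
    have h3 : apexGame N a (B ∪ T) = if T = N \ S then (1:ℝ) else 0 := by
      by_cases hTN : T = N \ S
      · rw [if_pos hTN]
        apply apex_one; right
        subst hTN
        rw [hB']
        ext x
        simp only [Finset.mem_union, Finset.mem_sdiff, Finset.mem_singleton]
        constructor
        · rintro (⟨hy1, hy2⟩ | ⟨hy1, hy2⟩)
          · exact ⟨hSN hy1, hy2⟩
          · exact ⟨hy1, fun he => hy2 (he ▸ haS)⟩
        · rintro ⟨hy1, hy2⟩
          by_cases hx : x ∈ S
          · exact Or.inl ⟨hx, hy2⟩
          · exact Or.inr ⟨hy1, hx⟩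
      · rw [if_neg hTN]
        apply apex_zero
        rintro (⟨h, -⟩ | hEq)
        · exact haBT h
        · apply hTN
          ext x
          simp only [Finset.mem_sdiff]
          constructor
          · intro hx
            exact Finset.mem_sdiff.mp (hT hx)
          · rintro ⟨hy1, hy2⟩
            have hxa : x ≠ a := fun he => hy2 (he ▸ haS)
            have hmem : x ∈ B ∪ T := hEq ▸ Finset.mem_sdiff.mpr ⟨hy1,
              by simp only [Finset.mem_singleton]; exact hxa⟩
            rcases Finset.mem_union.mp hmem with h | h
            exacts [absurd (hBS h) hy2, h]
    rw [h1, h2, h3, h4, if_pos rfl]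
    split_ifs <;> ring
  · have hA' : (A \ {a}).Nonempty := by
      rw [Finset.sdiff_nonempty]
      intro hsub
      exact hAa (Finset.Subset.antisymm hsub (Finset.singleton_subset_iff.mpr haA))
    obtain ⟨c, hc⟩ := hA'
    have hcA : c ∈ A := (Finset.mem_sdiff.mp hc).1
    have hca : c ≠ a := by simpa using (Finset.mem_sdiff.mp hc).2
    have h2 : apexGame N a (A ∪ T) = 1 := apex_one (Or.inl ⟨Finset.mem_union_left _ haA,
      ⟨c, Finset.mem_sdiff.mpr ⟨Finset.mem_union_left _ hcA,
        by simp only [Finset.mem_singleton]; exact hca⟩⟩⟩)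
    have h3 : apexGame N a (B ∪ T) = 0 := by
      apply apex_zero
      rintro (⟨h, -⟩ | hEq)
      · exact haBT h
      · have hmem : c ∈ B ∪ T := hEq ▸ Finset.mem_sdiff.mpr ⟨hSN (hAS hcA),
          by simp only [Finset.mem_singleton]; exact hca⟩
        rcases Finset.mem_union.mp hmem with h | h
        exacts [Finset.disjoint_left.mp hd hcA h, hTS c (hAS hcA) h]
    rw [h1, h2, h3, h4, if_neg hAa]
    ring

end ApexHelpers

/-- values of the coopetition index in the apex game. -/
theorem statement13 (N : Finset α) (a : α) (ha : a ∈ N) (hn : 3 ≤ N.card)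
    (S : Finset α) (hS : S ⊆ N) (hs : 2 ≤ S.card)
    (p : Sym2 (Finset α) → ℝ) (q : Finset α → ℝ)
    (hp0 : ∀ π ∈ Pi2 S, 0 ≤ p π) (hp1 : ∑ π ∈ Pi2 S, p π = 1)
    (hq0 : ∀ T ∈ (N \ S).powerset, 0 ≤ q T) (hq1 : ∑ T ∈ (N \ S).powerset, q T = 1) :
    (a ∉ S → coop N (apexGame N a) p q S = q (N \ (S ∪ {a})) - q {a}) ∧
    (a ∈ S → S ≠ N →
      coop N (apexGame N a) p q S = (q ∅ - q (N \ S)) * p (s({a}, S \ {a}))) ∧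
    (S = N → coop N (apexGame N a) p q S = 0) := by
  
  constructor
  · -- a ∉ S
    intro haS
    have key : ∀ T ∈ (N \ S).powerset, q T * attitude (apexGame N a) p S T
        = q T * ((if T = N \ (S ∪ {a}) then 1 else 0) - (if T = {a} then 1 else 0)) := by
      intro T hT
      rw [Finset.mem_powerset] at hT
      congr 1
      unfold attitude
      have step : ∀ π ∈ Pi2 S, p π * BI (apexGame N a) π T
          = p π * ((if T = N \ (S ∪ {a}) then 1 else 0) - (if T = {a} then 1 else 0)) := by
        intro π hπ
        obtain ⟨Q, hQS, hQ0, hQ1, rfl⟩ := mem_Pi2.mp hπ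
        rw [BI_apex_out ha haS hS hQS (Finset.nonempty_iff_ne_empty.mpr hQ0)
          (Finset.sdiff_nonempty.mpr fun h => hQ1 (Finset.Subset.antisymm hQS h)) hT]
      rw [Finset.sum_congr rfl step, ← Finset.sum_mul, hp1, one_mul]
    have hmem1 : N \ (S ∪ {a}) ∈ (N \ S).powerset := by
      rw [Finset.mem_powerset]
      exact Finset.sdiff_subset_sdiff (le_refl N) Finset.subset_union_left
    have hmem2 : ({a} : Finset α) ∈ (N \ S).powerset := by
      rw [Finset.mem_powerset, Finset.singleton_subset_iff, Finset.mem_sdiff]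
      exact ⟨ha, haS⟩
    unfold coop
    rw [Finset.sum_congr rfl key]
    simp only [mul_sub, mul_ite, mul_one, mul_zero]
    rw [Finset.sum_sub_distrib,
      Finset.sum_ite_eq' ((N \ S).powerset) (N \ (S ∪ {a})) q,
      Finset.sum_ite_eq' ((N \ S).powerset) ({a} : Finset α) q,
      if_pos hmem1, if_pos hmem2]
  constructor
  · -- a ∈ S, S ≠ N
    intro haS _
    have hπ₀mem : s({a}, S \ {a}) ∈ Pi2 S := mem_Pi2.mpr ⟨{a},
      Finset.singleton_subset_iff.mpr haS, by simp,
      fun h => by rw [← h] at hs; simp at hs, rfl⟩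
    have key : ∀ T ∈ (N \ S).powerset, q T * attitude (apexGame N a) p S T
        = p (s({a}, S \ {a})) *
          (q T * ((if T = ∅ then 1 else 0) - (if T = N \ S then 1 else 0))) := by
      intro T hT
      rw [Finset.mem_powerset] at hT
      have hatt : attitude (apexGame N a) p S T = p (s({a}, S \ {a})) *
          ((if T = ∅ then 1 else 0) - (if T = N \ S then 1 else 0)) := by
        unfold attitude
        have step : ∀ π ∈ Pi2 S, p π * BI (apexGame N a) π T
            = if π = s({a}, S \ {a}) then
                p π * ((if T = ∅ then 1 else 0) - (if T = N \ S then 1 else 0))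
              else 0 := by
          intro π hπ
          obtain ⟨Q, hQS, hQ0, hQ1, rfl⟩ := mem_Pi2.mp hπ
          have hQne : Q.Nonempty := Finset.nonempty_iff_ne_empty.mpr hQ0
          have hSQne : (S \ Q).Nonempty :=
            Finset.sdiff_nonempty.mpr fun h => hQ1 (Finset.Subset.antisymm hQS h)
          have hdisj : Disjoint Q (S \ Q) := Finset.disjoint_sdiff
          have hUn : Q ∪ S \ Q = S := Finset.union_sdiff_of_subset hQS
          by_cases haQ : a ∈ Q
          · rw [BI_apex_in hS hUn hdisj haQ hSQne hT]
            have hiff : (Q = {a}) ↔ (s(Q, S \ Q) = s({a}, S \ {a})) := by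
              constructor
              · rintro rfl; rfl
              · intro h
                rw [Sym2.eq_iff] at h
                rcases h with ⟨h1, -⟩ | ⟨h1, -⟩
                · exact h1
                · exfalso; rw [h1] at haQ; simp at haQ
            by_cases hc : s(Q, S \ Q) = s({a}, S \ {a})
            · rw [if_pos (hiff.mpr hc), if_pos hc]
            · rw [if_neg (fun h => hc (hiff.mp h)), if_neg hc, mul_zero]
          · have haSQ : a ∈ S \ Q := Finset.mem_sdiff.mpr ⟨haS, haQ⟩
            rw [show s(Q, S \ Q) = s(S \ Q, Q) from Sym2.eq_swap]
            rw [BI_apex_in hS (by rw [Finset.union_comm]; exact hUn) hdisj.symm haSQ hQne hT]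
            have hiff : (S \ Q = {a}) ↔ (s(S \ Q, Q) = s({a}, S \ {a})) := by
              constructor
              · intro h
                have hQ' : Q = S \ {a} := by
                  rw [← Finset.sdiff_sdiff_eq_self hQS, h]
                rw [h, hQ']
              · intro h
                rw [Sym2.eq_iff] at h
                rcases h with ⟨h1, -⟩ | ⟨-, h2⟩
                · exact h1
                · exfalso; rw [h2] at haQ; exact haQ (Finset.mem_singleton_self a)
            by_cases hc : s(S \ Q, Q) = s({a}, S \ {a})
            · rw [if_pos (hiff.mpr hc), if_pos hc]
            · rw [if_neg (fun h => hc (hiff.mp h)), if_neg hc, mul_zero]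
        rw [Finset.sum_congr rfl step,
          Finset.sum_ite_eq' (Pi2 S) (s({a}, S \ {a})) _, if_pos hπ₀mem]
      rw [hatt]; ring
    have hmem1 : (∅ : Finset α) ∈ (N \ S).powerset := by simp
    have hmem2 : N \ S ∈ (N \ S).powerset := Finset.mem_powerset_self _
    unfold coop
    rw [Finset.sum_congr rfl key, ← Finset.mul_sum]
    simp only [mul_sub, mul_ite, mul_one, mul_zero]
    rw [Finset.sum_sub_distrib,
      Finset.sum_ite_eq' ((N \ S).powerset) (∅ : Finset α) q,
      Finset.sum_ite_eq' ((N \ S).powerset) (N \ S) q,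
      if_pos hmem1, if_pos hmem2]
    ring
  · -- S = N
    intro hSN
    have haS : a ∈ S := by rw [hSN]; exact ha
    have h1 : N \ S = ∅ := by rw [hSN, Finset.sdiff_self]
    unfold coop
    rw [h1, Finset.powerset_empty, Finset.sum_singleton]
    have hatt : attitude (apexGame N a) p S ∅ = 0 := by
      unfold attitude
      apply Finset.sum_eq_zero
      intro π hπ
      obtain ⟨Q, hQS, hQ0, hQ1, rfl⟩ := mem_Pi2.mp hπ
      have hQne : Q.Nonempty := Finset.nonempty_iff_ne_empty.mpr hQ0
      have hSQne : (S \ Q).Nonempty :=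
        Finset.sdiff_nonempty.mpr fun h => hQ1 (Finset.Subset.antisymm hQS h)
      have hdisj : Disjoint Q (S \ Q) := Finset.disjoint_sdiff
      have hUn : Q ∪ S \ Q = S := Finset.union_sdiff_of_subset hQS
      have hTsub : (∅ : Finset α) ⊆ N \ S := Finset.empty_subset _
      by_cases haQ : a ∈ Q
      · rw [BI_apex_in hS hUn hdisj haQ hSQne hTsub]
        simp [h1]
      · have haSQ : a ∈ S \ Q := Finset.mem_sdiff.mpr ⟨haS, haQ⟩
        rw [show s(Q, S \ Q) = s(S \ Q, Q) from Sym2.eq_swap]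
        rw [BI_apex_in hS (by rw [Finset.union_comm]; exact hUn) hdisj.symm haSQ hQne hTsub]
        simp [h1]
    rw [hatt, mul_zero]
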